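/- Let p ∈ (0,1) and γ ∈ ℝ with p < |γ| < 1/p. For f_γ(y) = γ^{Σ_i y_i} on ℤⁿ and x̃ = x + DLap(p)ⁿ, the expectation E[|f_γ(x̃)|] is finite, and the unique unbiased estimator from the tensorized debiasing operator equals g_γ(y) = A(γ)ⁿ·f_γ(y), where A(γ) = 1 - (p/(1-p)²)·(1-γ)²/γ. Moreover, if √p < |γ| < 1/√p then Var[g_γ(x̃)] = A(γ)^{2n}·Var[f_γ(x̃)]. -/

import Mathlib

/-!
Since `f_γ(y) = ∏ᵢ γ^{yᵢ}` is a product of one-dimensional exponentials, everything factorises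
over the coordinates. In one coordinate the noise weight times `|γ|^t` is the two-sided geometric
series `p^{|t|} |γ|^t`, which converges exactly when `p < |γ| < 1/p`, and `I - cΔ` acts on
`t ↦ γ^t` as multiplication by `1 - c(γ - 2 + γ⁻¹) = A(γ)`. Hence the tensorised operator
multiplies `f_γ` by `A(γ)ⁿ`, and the variance scales by `A(γ)^{2n}`.
-/

open Finset

theorem zpow_finset_sum {G₀ ι : Type*} [CommGroupWithZero G₀] {a : G₀} (ha : a ≠ 0)
    (s : Finset ι) (k : ι → ℤ) : a ^ (∑ i ∈ s, k i) = ∏ i ∈ s, a ^ k i := by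
  classical
  induction s using Finset.induction_on with
  | empty => simp
  | insert i s hi ih => rw [sum_insert hi, prod_insert hi, zpow_add₀ ha, ih]

theorem summable_zpow_abs_mul_zpow {p r : ℝ} (hp : 0 ≤ p) (hr : 0 < r) (hpr : p < r)
    (hpr' : p * r < 1) : Summable fun t : ℤ => p ^ |t| * r ^ t := by
  apply Summable.of_nat_of_neg
  · refine (summable_geometric_of_lt_one (by positivity) hpr').congr fun m => ?_
    simp [mul_pow]
  · have hlt : p * r⁻¹ < 1 := by rwa [mul_inv_lt_iff₀ hr, one_mul]
    refine (summable_geometric_of_lt_one (by positivity) hlt).congr fun m => ?_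
    simp [mul_pow, inv_pow]

theorem summable_fin_pi_prod_of_nonneg {κ : Type*} :
    ∀ {n : ℕ} {f : Fin n → κ → ℝ}, (∀ i, Summable (f i)) → (∀ i t, 0 ≤ f i t) →
      Summable fun η : Fin n → κ => ∏ i, f i (η i)
  | 0, _, _, _ => Summable.of_finite
  | _ + 1, f, hf, hf0 => by
    have htail := summable_fin_pi_prod_of_nonneg (fun i => hf i.succ) fun i => hf0 i.succ
    have hsplit := (hf 0).mul_of_nonneg htail (hf0 0) fun η =>
      prod_nonneg fun i _ => hf0 i.succ (η i)
    refine ((Fin.consEquiv fun _ => κ).symm.summable_iff.2 hsplit).congr fun η => ?_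
    simp [Fin.consEquiv, Fin.prod_univ_succ, Fin.tail]

theorem summable_prod_zpow_abs_mul_zpow_add {n : ℕ} {p r : ℝ} (hp : 0 ≤ p) (hr : 0 < r)
    (hpr : p < r) (hpr' : p * r < 1) (x : Fin n → ℤ) :
    Summable fun η : Fin n → ℤ => ∏ j, p ^ |η j| * r ^ (x j + η j) := by
  refine summable_fin_pi_prod_of_nonneg (f := fun j t => p ^ |t| * r ^ (x j + t))
    (fun j => ?_) fun j t =>
    mul_nonneg (zpow_nonneg hp _) (zpow_nonneg hr.le _)
  refine ((summable_zpow_abs_mul_zpow hp hr hpr hpr').mul_left (r ^ x j)).congr fun t => ?_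
  rw [zpow_add₀ hr.ne']
  ring

theorem sum_piFinset_zpow_sum_add_mul_prod {K : Type*} [Field K] {γ : K} (hγ : γ ≠ 0)
    {n : ℕ} (S : Finset ℤ) (α : ℤ → K) (y : Fin n → ℤ) :
    ∑ ξ ∈ Fintype.piFinset (fun _ : Fin n => S), γ ^ (∑ i, (y + ξ) i) * ∏ j, α (ξ j) =
      (∑ t ∈ S, γ ^ t * α t) ^ n * γ ^ (∑ i, y i) := by
  have hterm : ∀ ξ : Fin n → ℤ, γ ^ (∑ i, (y + ξ) i) * ∏ j, α (ξ j) =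
      γ ^ (∑ i, y i) * ∏ j, γ ^ ξ j * α (ξ j) := fun ξ => by
    simp only [Pi.add_apply, sum_add_distrib, zpow_add₀ hγ, prod_mul_distrib,
      zpow_finset_sum hγ]
    ring
  simp only [hterm, ← mul_sum]
  rw [← Fin.prod_const, prod_univ_sum, mul_comm]

/-- The coefficients of `I - cΔ`, with `Δ f(t) = f(t + 1) - 2 f(t) + f(t - 1)`, on `{-1, 0, 1}`. -/
def debiasStencil {K : Type*} [Field K] (c : K) (t : ℤ) : K :=
  if t = 0 then 1 + 2 * c else -c

theorem sum_zpow_mul_debiasStencil {K : Type*} [Field K] {γ : K} (hγ : γ ≠ 0) (c : K) :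
    ∑ t ∈ ({-1, 0, 1} : Finset ℤ), γ ^ t * debiasStencil c t = 1 - c * ((1 - γ) ^ 2 / γ) := by
  simp only [sum_insert (by decide : (-1 : ℤ) ∉ ({0, 1} : Finset ℤ)),
    sum_insert (by decide : (0 : ℤ) ∉ ({1} : Finset ℤ)), sum_singleton, debiasStencil]
  simp only [zpow_neg, zpow_one, zpow_zero, neg_eq_zero, one_ne_zero, ↓reduceIte, one_mul]
  field_simp
  ring

noncomputable def weightedVariance {ι : Type*} (w f : ι → ℝ) : ℝ :=
  ∑' i, w i * f i ^ 2 - (∑' i, w i * f i) ^ 2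

theorem weightedVariance_const_mul {ι : Type*} (w f : ι → ℝ) (c : ℝ) :
    weightedVariance w (fun i => c * f i) = c ^ 2 * weightedVariance w f := by
  have hmean : ∑' i, w i * (c * f i) = c * ∑' i, w i * f i := by
    rw [← tsum_mul_left]
    exact tsum_congr fun i => by ring
  have hsecond : ∑' i, w i * (c * f i) ^ 2 = c ^ 2 * ∑' i, w i * f i ^ 2 := by
    rw [← tsum_mul_left]
    exact tsum_congr fun i => by ring
  rw [weightedVariance, weightedVariance, hmean, hsecond]
  ring

theorem discrete_laplace_power_function
    (p : ℝ) (hp0 : 0 < p) (γ : ℝ)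
    (hγlo : p < |γ|) (hγhi : |γ| < 1 / p)
    (n : ℕ) (x : Fin n → ℤ)
    (α : ℤ → ℝ)
    (hα : ∀ ξ : ℤ, α ξ = if ξ = 0 then 1 + 2 * p / (1 - p) ^ 2 else -p / (1 - p) ^ 2)
    (A : ℝ) (hA : A = 1 - p / (1 - p) ^ 2 * ((1 - γ) ^ 2 / γ))
    (fγ : (Fin n → ℤ) → ℝ) (hfγ : ∀ y : Fin n → ℤ, fγ y = γ ^ (∑ i, y i))
    (w : (Fin n → ℤ) → ℝ)
    (hw : ∀ η : Fin n → ℤ, w η = ∏ j, (1 - p) / (1 + p) * p ^ |η j|) :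
    (Summable fun η : Fin n → ℤ => w η * |fγ (x + η)|) ∧
      (∀ y : Fin n → ℤ,
        (∑ ξ ∈ Fintype.piFinset (fun _ : Fin n => ({-1, 0, 1} : Finset ℤ)),
            fγ (y + ξ) * ∏ j, α (ξ j)) = A ^ n * fγ y) ∧
      (Real.sqrt p < |γ| → |γ| < 1 / Real.sqrt p →
        ((∑' η : Fin n → ℤ, w η * fγ (x + η) ^ 2) -
            (∑' η : Fin n → ℤ, w η * fγ (x + η)) ^ 2) *
          A ^ (2 * n) =
          (∑' η : Fin n → ℤ, w η * (A ^ n * fγ (x + η)) ^ 2) -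
            (∑' η : Fin n → ℤ, w η * (A ^ n * fγ (x + η))) ^ 2) := by
  have habs : 0 < |γ| := hp0.trans hγlo
  have hγ : γ ≠ 0 := abs_pos.mp habs
  have hα' : α = debiasStencil (p / (1 - p) ^ 2) :=
    funext fun t => by rw [hα, debiasStencil]; split_ifs <;> ring
  obtain rfl : fγ = fun y => γ ^ ∑ i, y i := funext hfγ
  obtain rfl : w = fun η => ∏ j, (1 - p) / (1 + p) * p ^ |η j| := funext hw
  refine ⟨?_, fun y => ?_, fun _ _ => ?_⟩
  · have hpγ : p * |γ| < 1 := by rwa [lt_div_iff₀ hp0, mul_comm] at hγhi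
    refine ((summable_prod_zpow_abs_mul_zpow_add hp0.le habs hγlo hpγ x).mul_left
      (((1 - p) / (1 + p)) ^ n)).congr fun η => ?_
    simp only [abs_zpow, zpow_finset_sum habs.ne', Pi.add_apply, prod_mul_distrib, prod_const,
      card_univ, Fintype.card_fin]
    ring
  · rw [sum_piFinset_zpow_sum_add_mul_prod hγ, hα', sum_zpow_mul_debiasStencil hγ, hA]
  · rw [mul_comm, pow_mul']
    exact (weightedVariance_const_mul _ (fun η => γ ^ ∑ i, (x + η) i) (A ^ n)).symm
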